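/- Let r, k ≥ 1 and let f_1,…,f_r, f_{r+1} : ℕ → [k] be k-colourings. If the colours c_1,…,c_r ∈ [k] are large with respect to f_1,…,f_r, then there exists a colour c_{r+1} ∈ [k] such that c_1,…,c_r,c_{r+1} is large with respect to f_1,…,f_r,f_{r+1}. -/

import Mathlib

/-!
Inside a progression of length `N` on which `f_1, …, f_r` are constant, the finitary van der
Waerden theorem (obtained from Mathlib's Gallai theorem by compactness of `ℕ → κ`) finds a
progression of length `M` on which `f_{r+1}` is constant as well, provided `N` is large enough
in terms of `M` and `k`. Its colour depends on `M`, but one of the `k` colours occurs for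
infinitely many `M`, and it is large since shorter progressions inherit monochromaticity.
-/

/-- Colours `c_1,…,c_r` are large with respect to colourings `F_1,…,F_r` if for every `M`
there is an arithmetic progression of length `M` (with positive common difference) on
which each `F_i` is constantly `c_i`. -/
def IsLarge {k r : ℕ} (c : Fin r → Fin k) (F : Fin r → ℕ → Fin k) : Prop :=
  ∀ M : ℕ, ∃ a d : ℕ, 1 ≤ d ∧ ∀ i : Fin r, ∀ t < M, F i (a + d * t) = c i

open Filter

theorem Nat.exists_monochromatic_ap {κ : Type*} [Finite κ] (M : ℕ) (C : ℕ → κ) :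
    ∃ a d : ℕ, 0 < d ∧ ∃ c : κ, ∀ t < M, C (a + d * t) = c := by
  obtain ⟨d, hd, a, c, hC⟩ := Combinatorics.exists_mono_homothetic_copy (Finset.range M) C
  refine ⟨a, d, hd, c, fun t ht => ?_⟩
  simpa [add_comm] using hC t (Finset.mem_range.mpr ht)

theorem Nat.exists_bound_monochromatic_ap (κ : Type*) [Finite κ] (M : ℕ) :
    ∃ N : ℕ, ∀ C : ℕ → κ, ∃ a d : ℕ, 0 < d ∧ ∃ c : κ,
      ∀ t < M, a + d * t < N ∧ C (a + d * t) = c := by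
  by_contra! h
  let _ : TopologicalSpace κ := ⊥
  have : DiscreteTopology κ := ⟨rfl⟩
  -- `K N` is the (closed) set of colourings with no monochromatic progression of length `M`
  -- inside `[0, N)`; a colouring in all of them would contradict `Nat.exists_monochromatic_ap`.
  let K : ℕ → Set (ℕ → κ) := fun N => {C | ∀ a d, 0 < d → ∀ c : κ,
      (∀ t < M, a + d * t < N) → ∃ t < M, C (a + d * t) ≠ c}
  have hK_closed : ∀ N, IsClosed (K N) := fun N => by
    simp only [K, Set.ofPred_forall]
    refine isClosed_iInter fun a => isClosed_iInter fun d => isClosed_iInter fun _ =>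
      isClosed_iInter fun c => isClosed_iInter fun _ => ?_
    have hne : ∀ t, IsClosed {C : ℕ → κ | C (a + d * t) ≠ c} := fun t =>
      (isClosed_discrete ({c}ᶜ : Set κ)).preimage
        (continuous_apply (A := fun _ : ℕ => κ) (a + d * t))
    convert (Set.finite_lt_nat M).isClosed_biUnion fun t _ => hne t using 1
    ext C
    simp
  have hK_anti : ∀ N, K (N + 1) ⊆ K N := fun N C hC a d hd c hN =>
    hC a d hd c fun t ht => (hN t ht).trans N.lt_succ_self
  have hK_nonempty : ∀ N, (K N).Nonempty := fun N => by
    obtain ⟨C, hC⟩ := h N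
    refine ⟨C, fun a d hd c hN => ?_⟩
    obtain ⟨t, ht, hne⟩ := hC a d hd c
    exact ⟨t, ht, hne (hN t ht)⟩
  obtain ⟨C, hC⟩ := IsCompact.nonempty_iInter_of_sequence_nonempty_isCompact_isClosed K
    hK_anti hK_nonempty (hK_closed 0).isCompact hK_closed
  obtain ⟨a, d, hd, c, hmono⟩ := Nat.exists_monochromatic_ap M C
  obtain ⟨t, ht, hne⟩ := Set.mem_iInter.mp hC (a + d * M) a d hd c fun t ht => by
    have := Nat.mul_lt_mul_of_pos_left ht hd
    omega
  exact hne (hmono t ht)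

theorem IsLarge.exists_snoc_ap {r k : ℕ} {F : Fin (r + 1) → ℕ → Fin k} {c : Fin r → Fin k}
    (hc : IsLarge c (fun i => F i.castSucc)) (M : ℕ) :
    ∃ c' : Fin k, ∃ a d : ℕ, 1 ≤ d ∧
      ∀ i, ∀ t < M, F i (a + d * t) = Fin.snoc (α := fun _ => Fin k) c c' i := by
  obtain ⟨N, hN⟩ := Nat.exists_bound_monochromatic_ap (Fin k) M
  obtain ⟨a, d, hd, hc⟩ := hc N
  obtain ⟨b, e, he, c', hbe⟩ := hN fun t => F (Fin.last r) (a + d * t)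
  refine ⟨c', a + d * b, d * e, Nat.mul_pos hd he, fun i t ht => ?_⟩
  rw [show a + d * b + d * e * t = a + d * (b + e * t) by ring]
  induction i using Fin.lastCases with
  | last => simpa using (hbe t ht).2
  | cast i => simpa using hc i _ (hbe t ht).1

theorem isLarge_of_frequently {r k : ℕ} {F : Fin r → ℕ → Fin k} {c : Fin r → Fin k}
    (h : ∃ᶠ M in atTop, ∃ a d : ℕ, 1 ≤ d ∧ ∀ i, ∀ t < M, F i (a + d * t) = c i) :
    IsLarge c F := fun M => by
  obtain ⟨M', hM', a, d, hd, hF⟩ := frequently_atTop.mp h M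
  exact ⟨a, d, hd, fun i t ht => hF i t (ht.trans_le hM')⟩

theorem extension_lemma_general (r k : ℕ)
    (F : Fin (r + 1) → ℕ → Fin k) (c : Fin r → Fin k)
    (hc : IsLarge c (fun i : Fin r => F i.castSucc)) :
    ∃ c' : Fin k, IsLarge (Fin.snoc c c') F := by
  obtain ⟨c', hc'⟩ := frequently_exists.mp
    (Frequently.of_forall (f := atTop) (IsLarge.exists_snoc_ap hc))
  exact ⟨c', isLarge_of_frequently hc'⟩

/-- **Extension lemma.** If `c_1,…,c_r` is large with respect to `f_1,…,f_r`, then for any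
further colouring `f_{r+1}` there is a colour `c_{r+1}` such that `c_1,…,c_{r+1}` is
large with respect to `f_1,…,f_{r+1}`. -/
theorem extension_lemma (r k : ℕ) (hr : 1 ≤ r) (hk : 1 ≤ k)
    (F : Fin (r + 1) → ℕ → Fin k) (c : Fin r → Fin k)
    (hc : IsLarge c (fun i : Fin r => F i.castSucc)) :
    ∃ c' : Fin k, IsLarge (Fin.snoc c c') F :=
  extension_lemma_general r k F c hc
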